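/- arXiv:2106.05203 — 4 statements merged into one kernel-verified Lean document; each statement's English description precedes it below -/
import Mathlib

section
/- Let {v^t} be a sequence of vectors in R^d, and let M be the (deterministic) Markov compressor built from a deterministic biased compressor C ∈ B(α): M(v^0) = C(v^0) and M(v^{t+1}) = M(v^t) + C(v^{t+1} - M(v^t)). Define the distortion D^t = ||M(v^t) - v^t||² and increments Δ^t = ||v^{t+1} - v^t||². Then for constants θ = 1-(1-α)(1+s) and β = (1-α)(1+1/s) with s chosen so that θ > 0, one has D^t ≤ (1-θ)^t D^0 + β Σ_{i=0}^{t-1} (1-θ)^i Δ^{t-1-i} for all t ≥ 1. -/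
/-!
The error `m (t+1) - v (t+1)` of the Markov compressor is `C x - x` for `x = v (t+1) - m t`, so
contractivity of `C` bounds its square by `(1 - α) ‖x‖²`. Splitting `x = (v (t+1) - v t) - (m t - v t)`
with Young's inequality `‖a + b‖² ≤ (1 + s) ‖a‖² + (1 + 1/s) ‖b‖²` gives the one-step recursion
`D (t+1) ≤ (1 - θ) D t + β Δ t`, which unrolls to the claimed geometric bound.
-/

open Finset

theorem norm_add_sq_le_one_add_mul {E : Type*} [SeminormedAddCommGroup E] (a b : E) {s : ℝ}
    (hs : 0 < s) :
    ‖a + b‖ ^ 2 ≤ (1 + s) * ‖a‖ ^ 2 + (1 + 1 / s) * ‖b‖ ^ 2 :=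
  calc ‖a + b‖ ^ 2
    _ ≤ (‖a‖ + ‖b‖) ^ 2 := by gcongr; exact norm_add_le a b
    _ = ‖a‖ ^ 2 + ‖b‖ ^ 2 + 2 * ‖a‖ * ‖b‖ := by ring
    _ ≤ ‖a‖ ^ 2 + ‖b‖ ^ 2 + (s * ‖a‖ ^ 2 + s⁻¹ * ‖b‖ ^ 2) := by
      gcongr; exact two_mul_le_add_mul_sq hs
    _ = (1 + s) * ‖a‖ ^ 2 + (1 + 1 / s) * ‖b‖ ^ 2 := by ring

theorem le_pow_mul_add_sum_of_succ_le {x c : ℕ → ℝ} {q : ℝ} (hq : 0 ≤ q)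
    (h : ∀ t, x (t + 1) ≤ q * x t + c t) (t : ℕ) :
    x t ≤ q ^ t * x 0 + ∑ i ∈ range t, q ^ i * c (t - 1 - i) := by
  induction t with
  | zero => simp
  | succ t ih =>
    have hsum : ∑ i ∈ range (t + 1), q ^ i * c (t + 1 - 1 - i)
        = q * ∑ i ∈ range t, q ^ i * c (t - 1 - i) + c t := by
      rw [sum_range_succ', mul_sum]
      congr 1
      · refine sum_congr rfl fun i _ => ?_
        rw [pow_succ', mul_assoc, show t + 1 - 1 - (i + 1) = t - 1 - i by omega]
      · simp
    calc x (t + 1)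
      _ ≤ q * x t + c t := h t
      _ ≤ q * (q ^ t * x 0 + ∑ i ∈ range t, q ^ i * c (t - 1 - i)) + c t := by gcongr
      _ = q ^ (t + 1) * x 0 + ∑ i ∈ range (t + 1), q ^ i * c (t + 1 - 1 - i) := by
        rw [hsum, pow_succ']; ring

theorem norm_markov_update_sub_sq_le {E : Type*} [SeminormedAddCommGroup E] {C : E → E} {ρ : ℝ}
    (hρ : 0 ≤ ρ) (hC : ∀ x, ‖C x - x‖ ^ 2 ≤ ρ * ‖x‖ ^ 2) (m v v' : E) {s : ℝ} (hs : 0 < s) :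
    ‖m + C (v' - m) - v'‖ ^ 2 ≤ ρ * (1 + s) * ‖m - v‖ ^ 2 + ρ * (1 + 1 / s) * ‖v' - v‖ ^ 2 :=
  calc ‖m + C (v' - m) - v'‖ ^ 2
    _ = ‖C (v' - m) - (v' - m)‖ ^ 2 := by congr 2; abel
    _ ≤ ρ * ‖-(m - v) + (v' - v)‖ ^ 2 := by
      rw [show -(m - v) + (v' - v) = v' - m by abel]; exact hC _
    _ ≤ ρ * ((1 + s) * ‖m - v‖ ^ 2 + (1 + 1 / s) * ‖v' - v‖ ^ 2) := by
      grw [norm_add_sq_le_one_add_mul _ _ hs, norm_neg]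
    _ = ρ * (1 + s) * ‖m - v‖ ^ 2 + ρ * (1 + 1 / s) * ‖v' - v‖ ^ 2 := by ring

theorem markov_distortion_general {d : ℕ}
    (C : EuclideanSpace ℝ (Fin d) → EuclideanSpace ℝ (Fin d)) (α : ℝ)
    (hα1 : α ≤ 1)
    (hC : ∀ x, ‖C x - x‖ ^ 2 ≤ (1 - α) * ‖x‖ ^ 2)
    (v m : ℕ → EuclideanSpace ℝ (Fin d))
    (hm : ∀ t, m (t + 1) = m t + C (v (t + 1) - m t))
    (s : ℝ) (hs : 0 < s)
    (θ β : ℝ) (hθ : θ = 1 - (1 - α) * (1 + s)) (hβ : β = (1 - α) * (1 + 1 / s))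
    (D Δ : ℕ → ℝ)
    (hD : ∀ t, D t = ‖m t - v t‖ ^ 2)
    (hΔ : ∀ t, Δ t = ‖v (t + 1) - v t‖ ^ 2) :
    ∀ t, 1 ≤ t →
      D t ≤ (1 - θ) ^ t * D 0 + β * ∑ i ∈ Finset.range t, (1 - θ) ^ i * Δ (t - 1 - i) := by
  have hρ : 0 ≤ 1 - α := sub_nonneg.mpr hα1
  have hq : 1 - θ = (1 - α) * (1 + s) := by rw [hθ, sub_sub_cancel]
  have step : ∀ t, D (t + 1) ≤ (1 - θ) * D t + β * Δ t := fun t => by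
    rw [hD, hD, hΔ, hm, hq, hβ]
    exact norm_markov_update_sub_sq_le hρ hC (m t) (v t) (v (t + 1)) hs
  intro t _
  rw [mul_sum]
  simpa only [mul_left_comm β] using
    le_pow_mul_add_sum_of_succ_le (by rw [hq]; positivity) step t

/-- Distortion bound for the (deterministic) Markov compressor `M` built from a
deterministic contractive compressor `C ∈ B(α)`. -/
theorem markov_distortion {d : ℕ}
    (C : EuclideanSpace ℝ (Fin d) → EuclideanSpace ℝ (Fin d)) (α : ℝ)
    (hα0 : 0 < α) (hα1 : α ≤ 1)
    (hC : ∀ x, ‖C x - x‖ ^ 2 ≤ (1 - α) * ‖x‖ ^ 2)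
    (v m : ℕ → EuclideanSpace ℝ (Fin d))
    (hm0 : m 0 = C (v 0))
    (hm : ∀ t, m (t + 1) = m t + C (v (t + 1) - m t))
    (s : ℝ) (hs : 0 < s) (hcontr : (1 - α) * (1 + s) < 1)
    (θ β : ℝ) (hθ : θ = 1 - (1 - α) * (1 + s)) (hβ : β = (1 - α) * (1 + 1 / s))
    (D Δ : ℕ → ℝ)
    (hD : ∀ t, D t = ‖m t - v t‖ ^ 2)
    (hΔ : ∀ t, Δ t = ‖v (t + 1) - v t‖ ^ 2) :
    ∀ t, 1 ≤ t →
      D t ≤ (1 - θ) ^ t * D 0 + β * ∑ i ∈ Finset.range t, (1 - θ) ^ i * Δ (t - 1 - i) :=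
  markov_distortion_general C α hα1 hC v m hm s hs θ β hθ hβ D Δ hD hΔ
end

section
/- (Deterministic EF21 convergence, nonconvex case.) Let f = (1/n) Σ_i f_i, where each f_i has L_i-Lipschitz gradient, f has L-Lipschitz gradient, and f is bounded below by f^inf. Let C be a deterministic biased compressor with parameter α ∈ (0,1), set θ = 1 - √(1-α), β = (1-α)/(1-√(1-α)), L̃ = ((1/n)Σ L_i²)^{1/2}. Run EF21: x^{t+1} = x^t - γ g^t with g^t = (1/n)Σ g_i^t and g_i^{t+1} = g_i^t + C(∇f_i(x^{t+1}) - g_i^t), with stepsize 0 < γ ≤ (L + L̃√(β/θ))^{-1}. Then for every T ≥ 1, (1/T) Σ_{t=0}^{T-1} ||∇f(x^t)||² ≤ 2(f(x^0) - f^inf)/(γT) + G^0/(θT), where G^t = (1/n)Σ_i ||g_i^t - ∇f_i(x^t)||². -/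
/-!
The proof is a Lyapunov argument for `Φₜ = f(xᵗ) + γ/(2θ) Gᵗ`. The descent lemma for the
`L`-smooth `f`, applied to the inexact gradient step `xᵗ⁺¹ = xᵗ - γ gᵗ`, gives
`f(xᵗ⁺¹) ≤ f(xᵗ) - γ/2 ‖∇f(xᵗ)‖² - γ/2 (1 - γL) ‖gᵗ‖² + γ/2 Gᵗ`, while the compressor together with
Young's inequality contracts the estimator error: `Gᵗ⁺¹ ≤ (1 - θ) Gᵗ + β L̃² γ² ‖gᵗ‖²`. The stepsize
bound is exactly what makes the `‖gᵗ‖²` terms of `Φₜ₊₁ - Φₜ` nonpositive, so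
`Φₜ₊₁ + γ/2 ‖∇f(xᵗ)‖² ≤ Φₜ`, and telescoping against `Φ_T ≥ f^inf` gives the bound.
-/

open Finset
open scoped Gradient InnerProductSpace

lemma norm_add_sq_le_div_add_div {E : Type*} [SeminormedAddCommGroup E] {p : ℝ}
    (hp0 : 0 < p) (hp1 : p < 1) (a b : E) :
    ‖a + b‖ ^ 2 ≤ ‖a‖ ^ 2 / p + ‖b‖ ^ 2 / (1 - p) := by
  have hq : 0 < 1 - p := sub_pos.2 hp1
  have young : (‖a‖ + ‖b‖) ^ 2 ≤ ‖a‖ ^ 2 / p + ‖b‖ ^ 2 / (1 - p) := by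
    rw [div_add_div _ _ hp0.ne' hq.ne', le_div_iff₀ (by positivity)]
    nlinarith [sq_nonneg ((1 - p) * ‖a‖ - p * ‖b‖)]
  exact (pow_le_pow_left₀ (norm_nonneg _) (norm_add_le a b) 2).trans young

lemma norm_smul_sum_sq_le {ι E : Type*} [Fintype ι] [SeminormedAddCommGroup E] [NormedSpace ℝ E]
    (a : ι → E) :
    ‖(1 / (Fintype.card ι : ℝ)) • ∑ i, a i‖ ^ 2
      ≤ (1 / (Fintype.card ι : ℝ)) * ∑ i, ‖a i‖ ^ 2 := by
  set N : ℝ := (Fintype.card ι : ℝ)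
  have hsum : ‖∑ i, a i‖ ^ 2 ≤ N * ∑ i, ‖a i‖ ^ 2 :=
    (pow_le_pow_left₀ (norm_nonneg _) (norm_sum_le _ _) 2).trans
      (by simpa using sq_sum_le_card_mul_sum_sq (s := univ) (f := fun i => ‖a i‖))
  calc ‖(1 / N) • ∑ i, a i‖ ^ 2 = (1 / N) ^ 2 * ‖∑ i, a i‖ ^ 2 := by
        rw [norm_smul, mul_pow, Real.norm_eq_abs, sq_abs]
    _ ≤ (1 / N) ^ 2 * (N * ∑ i, ‖a i‖ ^ 2) := by gcongr
    _ = (1 / N) * ∑ i, ‖a i‖ ^ 2 := by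
        rcases eq_or_ne N 0 with hN | hN
        · simp [hN]
        · field_simp

lemma nonneg_of_norm_sub_le_mul_norm_sub {E F : Type*} [NormedAddCommGroup E] [Nontrivial E]
    [SeminormedAddCommGroup F] {u : E → F} {K : ℝ} (h : ∀ x y, ‖u x - u y‖ ≤ K * ‖x - y‖) :
    0 ≤ K := by
  obtain ⟨x, hx⟩ := exists_ne (0 : E)
  have hK := (norm_nonneg _).trans (h x 0)
  rw [sub_zero] at hK
  exact nonneg_of_mul_nonneg_left hK (norm_pos_iff.2 hx)

lemma mul_add_sq_mul_le_one {a b γ : ℝ} (ha : 0 ≤ a) (hb : 0 ≤ b) (hγ0 : 0 < γ)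
    (hγ : γ ≤ (a + b)⁻¹) : γ * a + (γ * b) ^ 2 ≤ 1 := by
  have hab : 0 < a + b := inv_pos.1 (hγ0.trans_le hγ)
  have hsum : γ * a + γ * b ≤ 1 := by
    calc γ * a + γ * b = γ * (a + b) := by ring
      _ ≤ (a + b)⁻¹ * (a + b) := by gcongr
      _ = 1 := inv_mul_cancel₀ hab.ne'
  nlinarith [mul_nonneg hγ0.le ha, mul_nonneg hγ0.le hb]

lemma sum_range_mul_le_of_add_mul_le {Φ a : ℕ → ℝ} {c m : ℝ}
    (hstep : ∀ t, Φ (t + 1) + c * a t ≤ Φ t) (hm : ∀ t, m ≤ Φ t) (T : ℕ) :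
    c * ∑ t ∈ range T, a t ≤ Φ 0 - m :=
  calc c * ∑ t ∈ range T, a t = ∑ t ∈ range T, c * a t := mul_sum _ _ _
    _ ≤ ∑ t ∈ range T, (Φ t - Φ (t + 1)) := sum_le_sum fun t _ => by linarith [hstep t]
    _ = Φ 0 - Φ T := sum_range_sub' Φ T
    _ ≤ Φ 0 - m := by linarith [hm T]

section Smooth

variable {E : Type*} [NormedAddCommGroup E] [InnerProductSpace ℝ E] [CompleteSpace E]

lemma le_add_inner_gradient_add_sq_of_lipschitz {F : E → ℝ} {L : ℝ} (hF : Differentiable ℝ F)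
    (hL : ∀ x y, ‖∇ F x - ∇ F y‖ ≤ L * ‖x - y‖) (x y : E) :
    F y ≤ F x + ⟪∇ F x, y - x⟫_ℝ + L / 2 * ‖y - x‖ ^ 2 := by
  set v := y - x
  let φ : ℝ → ℝ := fun t => F (x + t • v) - t * ⟪∇ F x, v⟫_ℝ - L / 2 * t ^ 2 * ‖v‖ ^ 2
  have hφ : ∀ t, HasDerivAt φ (⟪∇ F (x + t • v) - ∇ F x, v⟫_ℝ - L * t * ‖v‖ ^ 2) t := by
    intro t
    have hline : HasDerivAt (fun t : ℝ => x + t • v) v t := by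
      simpa using ((hasDerivAt_id t).smul_const v).const_add x
    have hFt := (hasGradientAt_iff_hasFDerivAt.1 (hF (x + t • v)).hasGradientAt).comp_hasDerivAt
      t hline
    have hlin := (hasDerivAt_id t).mul_const ⟪∇ F x, v⟫_ℝ
    have hquad := ((hasDerivAt_pow 2 t).const_mul (L / 2)).mul_const (‖v‖ ^ 2)
    refine ((hFt.sub hlin).sub hquad).congr_deriv ?_
    simp only [InnerProductSpace.toDual_apply_apply, inner_sub_left]
    push_cast
    ring
  have hφ' : ∀ t ∈ interior (Set.Ici (0 : ℝ)),
      ⟪∇ F (x + t • v) - ∇ F x, v⟫_ℝ - L * t * ‖v‖ ^ 2 ≤ 0 := by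
    intro t ht
    rw [interior_Ici, Set.mem_Ioi] at ht
    have hLt := hL (x + t • v) x
    rw [add_sub_cancel_left, norm_smul, Real.norm_eq_abs, abs_of_pos ht] at hLt
    nlinarith [real_inner_le_norm (∇ F (x + t • v) - ∇ F x) v, norm_nonneg v,
      mul_le_mul_of_nonneg_right hLt (norm_nonneg v)]
  have hanti := antitoneOn_of_hasDerivWithinAt_nonpos (convex_Ici 0)
    (fun t _ => (hφ t).continuousAt.continuousWithinAt) (fun t _ => (hφ t).hasDerivWithinAt) hφ'
  have h01 := hanti (Set.mem_Ici.2 le_rfl) (Set.mem_Ici.2 zero_le_one) zero_le_one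
  simp only [φ, zero_smul, add_zero, one_smul, zero_mul, sub_zero, one_mul, one_pow] at h01
  have hxv : x + v = y := add_sub_cancel x y
  rw [hxv] at h01
  linarith

lemma apply_sub_smul_le_of_lipschitz_gradient {F : E → ℝ} {L : ℝ} (hF : Differentiable ℝ F)
    (hL : ∀ x y, ‖∇ F x - ∇ F y‖ ≤ L * ‖x - y‖) (x v : E) (γ : ℝ) :
    F (x - γ • v) ≤ F x - γ / 2 * ‖∇ F x‖ ^ 2 - γ / 2 * (1 - γ * L) * ‖v‖ ^ 2
      + γ / 2 * ‖v - ∇ F x‖ ^ 2 := by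
  have hdesc := le_add_inner_gradient_add_sq_of_lipschitz hF hL x (x - γ • v)
  rw [sub_sub_cancel_left, inner_neg_right, real_inner_smul_right, norm_neg, norm_smul,
    mul_pow, Real.norm_eq_abs, sq_abs] at hdesc
  have hpolar := norm_sub_sq_real v (∇ F x)
  rw [real_inner_comm] at hpolar
  linear_combination hdesc - γ / 2 * hpolar

lemma gradient_const_mul_sum {ι : Type*} (s : Finset ι) (c : ℝ) {f : ι → E → ℝ} {x : E}
    (hf : ∀ i ∈ s, DifferentiableAt ℝ (f i) x) :
    ∇ (fun y => c * ∑ i ∈ s, f i y) x = c • ∑ i ∈ s, ∇ (f i) x := by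
  refine HasGradientAt.gradient ?_
  rw [hasGradientAt_iff_hasFDerivAt, map_smul, map_sum]
  exact (HasFDerivAt.fun_sum fun i hi => hasGradientAt_iff_hasFDerivAt.1
    (hf i hi).hasGradientAt).const_mul c

end Smooth

lemma one_sub_sqrt_one_sub_pos {α : ℝ} (hα : 0 < α) : 0 < 1 - √(1 - α) :=
  sub_pos.2 ((Real.sqrt_lt' one_pos).2 (by linarith))

/-- Young's inequality with weight `√(1 - α)` trades the contraction factor `1 - α` for
`√(1 - α) = 1 - θ`, at the price of the factor `β` on the perturbation `b`. -/
lemma norm_sq_compress_sub_le {E : Type*} [SeminormedAddCommGroup E] {C : E → E} {α : ℝ}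
    (hα0 : 0 < α) (hα1 : α < 1) (hC : ∀ x, ‖C x - x‖ ^ 2 ≤ (1 - α) * ‖x‖ ^ 2) (a b : E) :
    ‖C (a + b) - (a + b)‖ ^ 2
      ≤ √(1 - α) * ‖a‖ ^ 2 + (1 - α) / (1 - √(1 - α)) * ‖b‖ ^ 2 := by
  have hr0 : 0 < √(1 - α) := Real.sqrt_pos.2 (by linarith)
  have hr1 : √(1 - α) < 1 := sub_pos.1 (one_sub_sqrt_one_sub_pos hα0)
  have hr2 : √(1 - α) ^ 2 = 1 - α := Real.sq_sqrt (by linarith)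
  calc ‖C (a + b) - (a + b)‖ ^ 2 ≤ (1 - α) * ‖a + b‖ ^ 2 := hC _
    _ ≤ (1 - α) * (‖a‖ ^ 2 / √(1 - α) + ‖b‖ ^ 2 / (1 - √(1 - α))) :=
      mul_le_mul_of_nonneg_left (norm_add_sq_le_div_add_div hr0 hr1 a b) (by linarith)
    _ = (1 - α) / √(1 - α) * ‖a‖ ^ 2 + (1 - α) / (1 - √(1 - α)) * ‖b‖ ^ 2 := by ring
    _ = √(1 - α) * ‖a‖ ^ 2 + (1 - α) / (1 - √(1 - α)) * ‖b‖ ^ 2 := by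
      rw [div_eq_of_eq_mul hr0.ne' (by rw [← sq, hr2])]

namespace EF21

variable {E : Type*} [NormedAddCommGroup E] [InnerProductSpace ℝ E] [CompleteSpace E] {n : ℕ}

noncomputable def estimatorError (f : Fin n → E → ℝ) (x : ℕ → E) (g : Fin n → ℕ → E)
    (t : ℕ) : ℝ :=
  (1 / (n : ℝ)) * ∑ i, ‖g i t - ∇ (f i) (x t)‖ ^ 2

lemma estimatorError_nonneg (f : Fin n → E → ℝ) (x : ℕ → E) (g : Fin n → ℕ → E) (t : ℕ) :
    0 ≤ estimatorError f x g t := by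
  unfold estimatorError
  positivity

lemma norm_smul_sum_sub_gradient_sq_le {f : Fin n → E → ℝ} (hf : ∀ i, Differentiable ℝ (f i))
    (x : ℕ → E) (g : Fin n → ℕ → E) (t : ℕ) :
    ‖(1 / (n : ℝ)) • ∑ i, g i t - ∇ (fun y => (1 / (n : ℝ)) * ∑ i, f i y) (x t)‖ ^ 2
      ≤ estimatorError f x g t := by
  rw [gradient_const_mul_sum _ _ fun i _ => (hf i).differentiableAt, ← smul_sub,
    ← sum_sub_distrib]
  simpa [estimatorError] using norm_smul_sum_sq_le fun i => g i t - ∇ (f i) (x t)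

lemma estimatorError_succ_le {f : Fin n → E → ℝ} {L : Fin n → ℝ}
    (hlip : ∀ i x y, ‖∇ (f i) x - ∇ (f i) y‖ ≤ L i * ‖x - y‖) {C : E → E} {α : ℝ}
    (hα0 : 0 < α) (hα1 : α < 1) (hC : ∀ x, ‖C x - x‖ ^ 2 ≤ (1 - α) * ‖x‖ ^ 2)
    {x : ℕ → E} {g : Fin n → ℕ → E}
    (hg : ∀ i t, g i (t + 1) = g i t + C (∇ (f i) (x (t + 1)) - g i t)) (t : ℕ) :
    estimatorError f x g (t + 1)
      ≤ √(1 - α) * estimatorError f x g t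
        + (1 - α) / (1 - √(1 - α)) * ((1 / (n : ℝ)) * ∑ i, L i ^ 2) * ‖x (t + 1) - x t‖ ^ 2 := by
  have hagent : ∀ i, ‖g i (t + 1) - ∇ (f i) (x (t + 1))‖ ^ 2
      ≤ √(1 - α) * ‖g i t - ∇ (f i) (x t)‖ ^ 2
        + (1 - α) / (1 - √(1 - α)) * (L i ^ 2 * ‖x (t + 1) - x t‖ ^ 2) := by
    intro i
    have hsplit : ∇ (f i) (x (t + 1)) - g i t
        = (∇ (f i) (x t) - g i t) + (∇ (f i) (x (t + 1)) - ∇ (f i) (x t)) := by abel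
    have hcomp := norm_sq_compress_sub_le hα0 hα1 hC (∇ (f i) (x t) - g i t)
      (∇ (f i) (x (t + 1)) - ∇ (f i) (x t))
    rw [← hsplit, norm_sub_rev (∇ (f i) (x t))] at hcomp
    have hgrad :
        ‖∇ (f i) (x (t + 1)) - ∇ (f i) (x t)‖ ^ 2 ≤ L i ^ 2 * ‖x (t + 1) - x t‖ ^ 2 := by
      rw [← mul_pow]
      exact pow_le_pow_left₀ (norm_nonneg _) (hlip i _ _) 2
    have hres : g i (t + 1) - ∇ (f i) (x (t + 1))
        = C (∇ (f i) (x (t + 1)) - g i t) - (∇ (f i) (x (t + 1)) - g i t) := by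
      rw [hg i t]; abel
    have hβ0 : 0 ≤ (1 - α) / (1 - √(1 - α)) :=
      div_nonneg (by linarith) (one_sub_sqrt_one_sub_pos hα0).le
    rw [hres]
    linarith [mul_le_mul_of_nonneg_left hgrad hβ0]
  unfold estimatorError
  calc (1 / (n : ℝ)) * ∑ i, ‖g i (t + 1) - ∇ (f i) (x (t + 1))‖ ^ 2
      ≤ (1 / (n : ℝ)) * ∑ i, (√(1 - α) * ‖g i t - ∇ (f i) (x t)‖ ^ 2
        + (1 - α) / (1 - √(1 - α)) * (L i ^ 2 * ‖x (t + 1) - x t‖ ^ 2)) := by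
        gcongr with i
        exact hagent i
    _ = _ := by
        rw [sum_add_distrib, ← mul_sum, ← mul_sum, ← sum_mul]
        ring

lemma lyapunov_step {f : Fin n → E → ℝ} {L : Fin n → ℝ} {F : E → ℝ} {Lf : ℝ}
    (hdiff : ∀ i, Differentiable ℝ (f i))
    (hlip : ∀ i x y, ‖∇ (f i) x - ∇ (f i) y‖ ≤ L i * ‖x - y‖)
    (hF : ∀ x, F x = (1 / (n : ℝ)) * ∑ i, f i x) (hFdiff : Differentiable ℝ F)
    (hFlip : ∀ x y, ‖∇ F x - ∇ F y‖ ≤ Lf * ‖x - y‖)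
    {C : E → E} {α θ β γ : ℝ} (hα0 : 0 < α) (hα1 : α < 1)
    (hC : ∀ x, ‖C x - x‖ ^ 2 ≤ (1 - α) * ‖x‖ ^ 2)
    (hθ : θ = 1 - √(1 - α)) (hβ : β = (1 - α) / (1 - √(1 - α)))
    (hγ : γ * Lf + γ ^ 2 * (β / θ) * ((1 / (n : ℝ)) * ∑ i, L i ^ 2) ≤ 1) (hγ0 : 0 < γ)
    {x : ℕ → E} {g : Fin n → ℕ → E}
    (hx : ∀ t, x (t + 1) = x t - γ • ((1 / (n : ℝ)) • ∑ i, g i t))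
    (hg : ∀ i t, g i (t + 1) = g i t + C (∇ (f i) (x (t + 1)) - g i t)) (t : ℕ) :
    F (x (t + 1)) + γ / (2 * θ) * estimatorError f x g (t + 1) + γ / 2 * ‖∇ F (x t)‖ ^ 2
      ≤ F (x t) + γ / (2 * θ) * estimatorError f x g t := by
  obtain rfl : F = fun y => (1 / (n : ℝ)) * ∑ i, f i y := funext hF
  set v := (1 / (n : ℝ)) • ∑ i, g i t
  have hθ0 : 0 < θ := hθ ▸ one_sub_sqrt_one_sub_pos hα0
  have hdesc := apply_sub_smul_le_of_lipschitz_gradient hFdiff hFlip (x t) v γ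
  rw [← hx t] at hdesc
  have herr := norm_smul_sum_sub_gradient_sq_le hdiff x g t
  have hrec := estimatorError_succ_le hlip hα0 hα1 hC hg t
  rw [← hβ, show √(1 - α) = 1 - θ by linarith, hx t, sub_sub_cancel_left, norm_neg, norm_smul,
    mul_pow, Real.norm_eq_abs, sq_abs] at hrec
  have hkθ : γ / (2 * θ) * θ = γ / 2 := by field_simp
  linear_combination hdesc + γ / 2 * herr + γ / (2 * θ) * hrec + γ / 2 * ‖v‖ ^ 2 * hγ
    - estimatorError f x g t * hkθ

end EF21

theorem EF21_nonconvex_general {d n : ℕ}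
    (f : Fin n → EuclideanSpace ℝ (Fin d) → ℝ) (L : Fin n → ℝ) (Lf : ℝ)
    (hdiff : ∀ i, Differentiable ℝ (f i))
    (hlip : ∀ i x y, ‖gradient (f i) x - gradient (f i) y‖ ≤ L i * ‖x - y‖)
    (F : EuclideanSpace ℝ (Fin d) → ℝ)
    (hF : ∀ x, F x = (1 / (n : ℝ)) * ∑ i, f i x)
    (hFdiff : Differentiable ℝ F)
    (hFlip : ∀ x y, ‖gradient F x - gradient F y‖ ≤ Lf * ‖x - y‖)
    (finf : ℝ) (hbelow : ∀ x, finf ≤ F x)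
    (C : EuclideanSpace ℝ (Fin d) → EuclideanSpace ℝ (Fin d)) (α : ℝ)
    (hα0 : 0 < α) (hα1 : α < 1)
    (hC : ∀ x, ‖C x - x‖ ^ 2 ≤ (1 - α) * ‖x‖ ^ 2)
    (θ β Lt : ℝ)
    (hθ : θ = 1 - Real.sqrt (1 - α))
    (hβ : β = (1 - α) / (1 - Real.sqrt (1 - α)))
    (hLt : Lt = Real.sqrt ((1 / (n : ℝ)) * ∑ i, (L i) ^ 2))
    (γ : ℝ) (hγ0 : 0 < γ) (hγ : γ ≤ (Lf + Lt * Real.sqrt (β / θ))⁻¹)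
    (x : ℕ → EuclideanSpace ℝ (Fin d)) (g : Fin n → ℕ → EuclideanSpace ℝ (Fin d))
    (hx : ∀ t, x (t + 1) = x t - γ • ((1 / (n : ℝ)) • ∑ i, g i t))
    (hg : ∀ i t, g i (t + 1) = g i t + C (gradient (f i) (x (t + 1)) - g i t)) :
    ∀ T : ℕ, 1 ≤ T →
      (1 / (T : ℝ)) * ∑ t ∈ Finset.range T, ‖gradient F (x t)‖ ^ 2
        ≤ 2 * (F (x 0) - finf) / (γ * T)
          + ((1 / (n : ℝ)) * ∑ i, ‖g i 0 - gradient (f i) (x 0)‖ ^ 2) / (θ * T) := by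
  intro T hT
  have hT0 : (0 : ℝ) < T := by exact_mod_cast hT
  obtain hE | hE := subsingleton_or_nontrivial (EuclideanSpace ℝ (Fin d))
  · -- In dimension `0` nothing forces `0 ≤ Lf`, but every norm vanishes.
    have hzero : ∀ v : EuclideanSpace ℝ (Fin d), ‖v‖ = 0 := fun v => by
      rw [Subsingleton.elim v 0, norm_zero]
    simp only [one_div, hzero, ne_eq, OfNat.ofNat_ne_zero, not_false_eq_true, zero_pow,
      sum_const_zero, mul_zero, zero_div, add_zero, ge_iff_le]
    exact div_nonneg (by linarith [hbelow (x 0)]) (by positivity)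
  have hθ0 : 0 < θ := hθ ▸ one_sub_sqrt_one_sub_pos hα0
  have hβθ : 0 ≤ β / θ := by
    rw [hβ, ← hθ]
    exact div_nonneg (div_nonneg (by linarith) hθ0.le) hθ0.le
  have hstepsize : γ * Lf + γ ^ 2 * (β / θ) * ((1 / (n : ℝ)) * ∑ i, L i ^ 2) ≤ 1 := by
    have h := mul_add_sq_mul_le_one (nonneg_of_norm_sub_le_mul_norm_sub hFlip)
      (by positivity) hγ0 (hLt ▸ hγ)
    rw [mul_pow, mul_pow, Real.sq_sqrt (by positivity), Real.sq_sqrt hβθ] at h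
    linarith
  have hsum := sum_range_mul_le_of_add_mul_le (a := fun t => ‖gradient F (x t)‖ ^ 2)
    (Φ := fun t => F (x t) + γ / (2 * θ) * EF21.estimatorError f x g t) (c := γ / 2)
    (m := finf)
    (EF21.lyapunov_step hdiff hlip hF hFdiff hFlip hα0 hα1 hC hθ hβ hstepsize hγ0 hx hg)
    (fun t => le_add_of_le_of_nonneg (hbelow (x t))
      (mul_nonneg (div_pos hγ0 (by linarith)).le (EF21.estimatorError_nonneg f x g t))) T
  calc (1 / (T : ℝ)) * ∑ t ∈ range T, ‖∇ F (x t)‖ ^ 2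
      = 2 / (γ * T) * (γ / 2 * ∑ t ∈ range T, ‖∇ F (x t)‖ ^ 2) := by field_simp
    _ ≤ 2 / (γ * T) * (F (x 0) + γ / (2 * θ) * EF21.estimatorError f x g 0 - finf) := by
      gcongr
    _ = _ := by
      unfold EF21.estimatorError
      field_simp
      ring

/-- Deterministic EF21 convergence, nonconvex case. -/
theorem EF21_nonconvex {d n : ℕ} (hn : 0 < n)
    (f : Fin n → EuclideanSpace ℝ (Fin d) → ℝ) (L : Fin n → ℝ) (Lf : ℝ)
    (hdiff : ∀ i, Differentiable ℝ (f i))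
    (hlip : ∀ i x y, ‖gradient (f i) x - gradient (f i) y‖ ≤ L i * ‖x - y‖)
    (F : EuclideanSpace ℝ (Fin d) → ℝ)
    (hF : ∀ x, F x = (1 / (n : ℝ)) * ∑ i, f i x)
    (hFdiff : Differentiable ℝ F)
    (hFlip : ∀ x y, ‖gradient F x - gradient F y‖ ≤ Lf * ‖x - y‖)
    (finf : ℝ) (hbelow : ∀ x, finf ≤ F x)
    (C : EuclideanSpace ℝ (Fin d) → EuclideanSpace ℝ (Fin d)) (α : ℝ)
    (hα0 : 0 < α) (hα1 : α < 1)
    (hC : ∀ x, ‖C x - x‖ ^ 2 ≤ (1 - α) * ‖x‖ ^ 2)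
    (θ β Lt : ℝ)
    (hθ : θ = 1 - Real.sqrt (1 - α))
    (hβ : β = (1 - α) / (1 - Real.sqrt (1 - α)))
    (hLt : Lt = Real.sqrt ((1 / (n : ℝ)) * ∑ i, (L i) ^ 2))
    (γ : ℝ) (hγ0 : 0 < γ) (hγ : γ ≤ (Lf + Lt * Real.sqrt (β / θ))⁻¹)
    (x : ℕ → EuclideanSpace ℝ (Fin d)) (g : Fin n → ℕ → EuclideanSpace ℝ (Fin d))
    (hx : ∀ t, x (t + 1) = x t - γ • ((1 / (n : ℝ)) • ∑ i, g i t))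
    (hg : ∀ i t, g i (t + 1) = g i t + C (gradient (f i) (x (t + 1)) - g i t)) :
    ∀ T : ℕ, 1 ≤ T →
      (1 / (T : ℝ)) * ∑ t ∈ Finset.range T, ‖gradient F (x t)‖ ^ 2
        ≤ 2 * (F (x 0) - finf) / (γ * T)
          + ((1 / (n : ℝ)) * ∑ i, ‖g i 0 - gradient (f i) (x 0)‖ ^ 2) / (θ * T) :=
  EF21_nonconvex_general f L Lf hdiff hlip F hF hFdiff hFlip finf hbelow C α hα0 hα1 hC θ β Lt hθ hβ
    hLt γ hγ0 hγ x g hx hg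
end

section
/- (Restricted equivalence of EF and EF21.) Suppose C : R^d → R^d is deterministic, positively homogeneous (C(γx) = γC(x) for all γ > 0), and additive (C(x+y) = C(x) + C(y)). Then the EF iterates defined by w_i^0 = C(γ∇f_i(x^0)), e_i^0 = 0, x^{t+1} = x^t - (1/n)Σ_i w_i^t, e_i^{t+1} = e_i^t + γ∇f_i(x^t) - w_i^t, w_i^{t+1} = C(e_i^{t+1} + γ∇f_i(x^{t+1})), and the EF21 iterates defined by g_i^0 = C(∇f_i(x^0)), x^{t+1} = x^t - γ(1/n)Σ_i g_i^t, g_i^{t+1} = g_i^t + C(∇f_i(x^{t+1}) - g_i^t), satisfy w_i^t = γ g_i^t for all i and t, and hence produce identical iterate sequences {x^t}. -/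
/-!
EF compresses the accumulated error plus the new scaled gradient, `w⁺ = C(e + γ∇f(x))`,
and since `e⁺ + γ∇f(x⁺) = (e + γ∇f(x)) - w + γ∇f(x⁺)`, additivity of `C` gives the recursion
`w⁺ = w - C w + C(γ∇f(x⁺))`. Scaling the EF21 recursion by `γ` and using positive homogeneity
gives `γg⁺ = γg - C(γg) + C(γ∇f(y⁺))`, the same recursion. By induction on `t`, equal messages
`w = γg` produce equal steps `x⁺ = y⁺`, and equal points produce equal messages.
-/

section

variable {E ι : Type*} [AddCommGroup E]

lemma ef_message_succ (C : E →+ E) {w e u u' : E} (hw : w = C (e + u)) :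
    C (e + u - w + u') = w - C w + C u' := by
  rw [map_add, map_sub, ← hw]

variable [Module ℝ E]

lemma ef_message_eq (C : E → E) (G : ι → E → E) (γ : ℝ) (x : ℕ → E) (w e : ι → ℕ → E)
    (hw0 : ∀ i, w i 0 = C (γ • G i (x 0))) (he0 : ∀ i, e i 0 = 0)
    (hw : ∀ i t, w i (t + 1) = C (e i (t + 1) + γ • G i (x (t + 1)))) (i : ι) (t : ℕ) :
    w i t = C (e i t + γ • G i (x t)) := by
  cases t with
  | zero => rw [hw0, he0, zero_add]
  | succ t => exact hw i t

lemma smul_ef21_message_succ (C : E →+ E) (hhom : ∀ γ : ℝ, 0 < γ → ∀ x, C (γ • x) = γ • C x)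
    {γ : ℝ} (hγ : 0 < γ) (g v : E) :
    γ • (g + C (v - g)) = γ • g - C (γ • g) + C (γ • v) := by
  rw [hhom γ hγ, hhom γ hγ, map_sub, smul_add, smul_sub]
  abel

variable [Fintype ι]

/-- `G i` plays the role of `∇f_i` and `a` of the averaging weight `1/n`. -/
theorem ef_message_eq_smul_ef21_message (C : E →+ E)
    (hhom : ∀ γ : ℝ, 0 < γ → ∀ x, C (γ • x) = γ • C x) (G : ι → E → E) (a : ℝ)
    {γ : ℝ} (hγ : 0 < γ) (x y : ℕ → E) (w e g : ι → ℕ → E)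
    (hw0 : ∀ i, w i 0 = C (γ • G i (x 0))) (he0 : ∀ i, e i 0 = 0)
    (hx : ∀ t, x (t + 1) = x t - a • ∑ i, w i t)
    (he : ∀ i t, e i (t + 1) = e i t + γ • G i (x t) - w i t)
    (hw : ∀ i t, w i (t + 1) = C (e i (t + 1) + γ • G i (x (t + 1))))
    (hy0 : y 0 = x 0) (hg0 : ∀ i, g i 0 = C (G i (y 0)))
    (hy : ∀ t, y (t + 1) = y t - γ • (a • ∑ i, g i t))
    (hg : ∀ i t, g i (t + 1) = g i t + C (G i (y (t + 1)) - g i t)) (t : ℕ) :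
    (∀ i, w i t = γ • g i t) ∧ x t = y t := by
  induction t with
  | zero => exact ⟨fun i => by rw [hw0, hg0, hy0, hhom γ hγ], hy0.symm⟩
  | succ t ih =>
    obtain ⟨hwg, hxy⟩ := ih
    have hxy' : x (t + 1) = y (t + 1) := by
      simp only [hx, hy, hxy, hwg, ← Finset.smul_sum, smul_comm γ a]
    refine ⟨fun i => ?_, hxy'⟩
    rw [hw, he, ef_message_succ C (ef_message_eq C G γ x w e hw0 he0 hw i t), hg,
      smul_ef21_message_succ C hhom hγ, hwg, hxy']

end

theorem EF_EF21_equivalence_general {d n : ℕ}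
    (C : EuclideanSpace ℝ (Fin d) → EuclideanSpace ℝ (Fin d))
    (hhom : ∀ (γ : ℝ), 0 < γ → ∀ x, C (γ • x) = γ • C x)
    (hadd : ∀ x y, C (x + y) = C x + C y)
    (f : Fin n → EuclideanSpace ℝ (Fin d) → ℝ)
    (γ : ℝ) (hγ : 0 < γ)
    (x y : ℕ → EuclideanSpace ℝ (Fin d))
    (w e : Fin n → ℕ → EuclideanSpace ℝ (Fin d))
    (g : Fin n → ℕ → EuclideanSpace ℝ (Fin d))
    -- EF iterates
    (hw0 : ∀ i, w i 0 = C (γ • gradient (f i) (x 0)))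
    (he0 : ∀ i, e i 0 = 0)
    (hx : ∀ t, x (t + 1) = x t - (1 / (n : ℝ)) • ∑ i, w i t)
    (he : ∀ i t, e i (t + 1) = e i t + γ • gradient (f i) (x t) - w i t)
    (hw : ∀ i t, w i (t + 1) = C (e i (t + 1) + γ • gradient (f i) (x (t + 1))))
    -- EF21 iterates, started from the same point
    (hy0 : y 0 = x 0)
    (hg0 : ∀ i, g i 0 = C (gradient (f i) (y 0)))
    (hy : ∀ t, y (t + 1) = y t - γ • ((1 / (n : ℝ)) • ∑ i, g i t))
    (hg : ∀ i t, g i (t + 1) = g i t + C (gradient (f i) (y (t + 1)) - g i t)) :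
    (∀ i t, w i t = γ • g i t) ∧ (∀ t, x t = y t) := by
  have key := ef_message_eq_smul_ef21_message (AddMonoidHom.mk' C hadd) hhom
    (fun i => gradient (f i)) (1 / (n : ℝ)) hγ x y w e g hw0 he0 hx he hw hy0 hg0 hy hg
  exact ⟨fun i t => (key t).1 i, fun t => (key t).2⟩

/-- Restricted equivalence of EF and EF21: if `C` is deterministic, positively homogeneous
and additive, then the EF iterates satisfy `w_i^t = γ g_i^t` and the two methods produce
identical iterate sequences. -/
theorem EF_EF21_equivalence {d n : ℕ} (hn : 0 < n)
    (C : EuclideanSpace ℝ (Fin d) → EuclideanSpace ℝ (Fin d))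
    (hhom : ∀ (γ : ℝ), 0 < γ → ∀ x, C (γ • x) = γ • C x)
    (hadd : ∀ x y, C (x + y) = C x + C y)
    (f : Fin n → EuclideanSpace ℝ (Fin d) → ℝ)
    (hdiff : ∀ i, Differentiable ℝ (f i))
    (γ : ℝ) (hγ : 0 < γ)
    (x y : ℕ → EuclideanSpace ℝ (Fin d))
    (w e : Fin n → ℕ → EuclideanSpace ℝ (Fin d))
    (g : Fin n → ℕ → EuclideanSpace ℝ (Fin d))
    -- EF iterates
    (hw0 : ∀ i, w i 0 = C (γ • gradient (f i) (x 0)))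
    (he0 : ∀ i, e i 0 = 0)
    (hx : ∀ t, x (t + 1) = x t - (1 / (n : ℝ)) • ∑ i, w i t)
    (he : ∀ i t, e i (t + 1) = e i t + γ • gradient (f i) (x t) - w i t)
    (hw : ∀ i t, w i (t + 1) = C (e i (t + 1) + γ • gradient (f i) (x (t + 1))))
    -- EF21 iterates, started from the same point
    (hy0 : y 0 = x 0)
    (hg0 : ∀ i, g i 0 = C (gradient (f i) (y 0)))
    (hy : ∀ t, y (t + 1) = y t - γ • ((1 / (n : ℝ)) • ∑ i, g i t))
    (hg : ∀ i t, g i (t + 1) = g i t + C (gradient (f i) (y (t + 1)) - g i t)) :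
    (∀ i t, w i t = γ • g i t) ∧ (∀ t, x t = y t) :=
  EF_EF21_equivalence_general C hhom hadd f γ hγ x y w e g hw0 he0 hx he hw hy0 hg0 hy hg
end

section
/- (Single-node deterministic EF21 descent inequality.) Let f : R^d → R be L-smooth and bounded below by f^inf, let C be a deterministic compressor with ||C(x)-x||² ≤ (1-α)||x||², and run x^{t+1} = x^t - γ g^t, g^{t+1} = g^t + C(∇f(x^{t+1}) - g^t). With θ = 1-√(1-α), β = (1-α)/θ, and γ² β L²/θ + γL ≤ 1, the Lyapunov quantity Φ^t = f(x^t) - f^inf + (γ/(2θ))||g^t - ∇f(x^t)||² satisfies Φ^{t+1} ≤ Φ^t - (γ/2)||∇f(x^t)||² for all t ≥ 0. -/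
/-! The step `x ↦ x - γ g` gives, by the descent lemma,
`f x⁺ ≤ f x - γ/2 ‖∇f x‖² - (γ/2 - Lγ²/2) ‖g‖² + γ/2 ‖g - ∇f x‖²`.
The compressor contracts the estimation error: with `r = √(1 - α)`, Young's inequality weighted so
that `r² (1 + s) = r` yields `‖g⁺ - ∇f x⁺‖² ≤ (1 - θ) ‖g - ∇f x‖² + β ‖∇f x⁺ - ∇f x‖²`, and the last
norm is at most `Lγ ‖g‖`. Weighting the error by `γ / (2θ)` absorbs the `γ/2 ‖g - ∇f x‖²` term, and
the stepsize condition makes the net coefficient of `‖g‖²` nonpositive. -/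

open Set

section Smooth

variable {E : Type*} [NormedAddCommGroup E] [InnerProductSpace ℝ E] [CompleteSpace E]
  {f : E → ℝ} {L : ℝ}

theorem hasDerivAt_comp_add_smul (hf : Differentiable ℝ f) (x v : E) (s : ℝ) :
    HasDerivAt (fun s : ℝ => f (x + s • v)) (inner ℝ (gradient f (x + s • v)) v) s := by
  have hline : HasDerivAt (fun s : ℝ => x + s • v) v s := by
    simpa using ((hasDerivAt_id s).smul_const v).const_add x
  have hgrad := hasGradientAt_iff_hasFDerivAt.mp (hf (x + s • v)).hasGradientAt
  have h := hgrad.comp_hasDerivAt s hline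
  rw [InnerProductSpace.toDual_apply_apply] at h
  exact h

theorem image_le_add_inner_gradient_add_sq (hf : Differentiable ℝ f)
    (hL : ∀ a b, ‖gradient f a - gradient f b‖ ≤ L * ‖a - b‖) (x y : E) :
    f y ≤ f x + inner ℝ (gradient f x) (y - x) + L / 2 * ‖y - x‖ ^ 2 := by
  set v := y - x
  -- the gap between `f` and its quadratic upper model along the segment is antitone
  let φ : ℝ → ℝ := fun s => f (x + s • v) - s * inner ℝ (gradient f x) v - L / 2 * s ^ 2 * ‖v‖ ^ 2
  have hφ' (s : ℝ) : HasDerivAt φ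
      (inner ℝ (gradient f (x + s • v)) v - inner ℝ (gradient f x) v - L * s * ‖v‖ ^ 2) s := by
    have := ((hasDerivAt_comp_add_smul hf x v s).sub ((hasDerivAt_id s).mul_const
      (inner ℝ (gradient f x) v))).sub (((hasDerivAt_pow 2 s).const_mul (L / 2)).mul_const (‖v‖ ^ 2))
    exact this.congr_deriv (by ring)
  have hanti : AntitoneOn φ (Ici 0) := by
    refine antitoneOn_of_hasDerivWithinAt_nonpos (convex_Ici 0)
      (fun s _ => (hφ' s).continuousAt.continuousWithinAt) (fun s _ => (hφ' s).hasDerivWithinAt)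
      fun s hs => ?_
    rw [interior_Ici, mem_Ioi] at hs
    have hslope : inner ℝ (gradient f (x + s • v) - gradient f x) v ≤ L * s * ‖v‖ ^ 2 :=
      calc inner ℝ (gradient f (x + s • v) - gradient f x) v
          ≤ ‖gradient f (x + s • v) - gradient f x‖ * ‖v‖ := real_inner_le_norm _ _
        _ ≤ L * ‖s • v‖ * ‖v‖ := by gcongr; simpa using hL (x + s • v) x
        _ = L * s * ‖v‖ ^ 2 := by rw [norm_smul, Real.norm_of_nonneg hs.le]; ring
    rw [inner_sub_left] at hslope
    linarith
  have hends := hanti self_mem_Ici (mem_Ici.2 zero_le_one) zero_le_one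
  simp only [φ, v, one_smul, zero_smul, add_zero, add_sub_cancel] at hends
  linarith

theorem image_sub_smul_le (hf : Differentiable ℝ f)
    (hL : ∀ a b, ‖gradient f a - gradient f b‖ ≤ L * ‖a - b‖) (x g : E) (γ : ℝ) :
    f (x - γ • g) ≤ f x - γ / 2 * ‖gradient f x‖ ^ 2 - (γ / 2 - L * γ ^ 2 / 2) * ‖g‖ ^ 2
      + γ / 2 * ‖g - gradient f x‖ ^ 2 := by
  have hquad := image_le_add_inner_gradient_add_sq hf hL x (x - γ • g)
  rw [sub_sub_cancel_left, norm_neg, norm_smul, mul_pow, Real.norm_eq_abs, sq_abs,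
    inner_neg_right, real_inner_smul_right] at hquad
  have hpolar := norm_sub_sq_real g (gradient f x)
  rw [real_inner_comm] at hpolar
  linear_combination hquad - γ / 2 * hpolar

end Smooth

-- Young's inequality `(a + b)² ≤ a² / r + b² / (1 - r)`, scaled by `r²`.
theorem sq_mul_add_sq_le {r : ℝ} (hr0 : 0 ≤ r) (hr1 : r < 1) (a b : ℝ) :
    r ^ 2 * (a + b) ^ 2 ≤ r * a ^ 2 + r ^ 2 / (1 - r) * b ^ 2 := by
  have hr1' : 0 < 1 - r := sub_pos.2 hr1
  have hgap : r * a ^ 2 + r ^ 2 / (1 - r) * b ^ 2 - r ^ 2 * (a + b) ^ 2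
      = r * ((1 - r) * a - r * b) ^ 2 / (1 - r) := by
    field_simp
    ring
  rw [← sub_nonneg, hgap]
  positivity

theorem sq_mul_norm_add_sq_le {E : Type*} [SeminormedAddCommGroup E] {r : ℝ} (hr0 : 0 ≤ r)
    (hr1 : r < 1) (u v : E) :
    r ^ 2 * ‖u + v‖ ^ 2 ≤ r * ‖u‖ ^ 2 + r ^ 2 / (1 - r) * ‖v‖ ^ 2 :=
  (mul_le_mul_of_nonneg_left (pow_le_pow_left₀ (norm_nonneg _) (norm_add_le u v) 2)
    (sq_nonneg r)).trans (sq_mul_add_sq_le hr0 hr1 _ _)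

theorem norm_add_compress_sub_sq_le {E : Type*} [SeminormedAddCommGroup E] {C : E → E} {α : ℝ}
    (hα0 : 0 < α) (hα1 : α ≤ 1) (hC : ∀ w, ‖C w - w‖ ^ 2 ≤ (1 - α) * ‖w‖ ^ 2) (g n n' : E) :
    ‖g + C (n' - g) - n'‖ ^ 2
      ≤ √(1 - α) * ‖g - n‖ ^ 2 + (1 - α) / (1 - √(1 - α)) * ‖n' - n‖ ^ 2 := by
  have hr : √(1 - α) ^ 2 = 1 - α := Real.sq_sqrt (sub_nonneg.2 hα1)
  have hr1 : √(1 - α) < 1 := by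
    rw [Real.sqrt_lt' one_pos]
    linarith
  calc ‖g + C (n' - g) - n'‖ ^ 2 = ‖C (n' - g) - (n' - g)‖ ^ 2 := by abel_nf
    _ ≤ (1 - α) * ‖(n - g) + (n' - n)‖ ^ 2 := by
      rw [sub_add_sub_cancel']
      exact hC _
    _ ≤ _ := by
      have hyoung := sq_mul_norm_add_sq_le (Real.sqrt_nonneg (1 - α)) hr1 (n - g) (n' - n)
      rwa [hr, norm_sub_rev n g] at hyoung

theorem EF21_single_node_descent_general {d : ℕ}
    (f : EuclideanSpace ℝ (Fin d) → ℝ) (L : ℝ)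
    (hdiff : Differentiable ℝ f)
    (hlip : ∀ x y, ‖gradient f x - gradient f y‖ ≤ L * ‖x - y‖)
    (finf : ℝ)
    (C : EuclideanSpace ℝ (Fin d) → EuclideanSpace ℝ (Fin d)) (α : ℝ)
    (hα0 : 0 < α) (hα1 : α < 1)
    (hC : ∀ x, ‖C x - x‖ ^ 2 ≤ (1 - α) * ‖x‖ ^ 2)
    (θ β : ℝ) (hθ : θ = 1 - Real.sqrt (1 - α)) (hβ : β = (1 - α) / θ)
    (γ : ℝ) (hγ0 : 0 < γ) (hγ : γ ^ 2 * β * L ^ 2 / θ + γ * L ≤ 1)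
    (x g : ℕ → EuclideanSpace ℝ (Fin d))
    (hx : ∀ t, x (t + 1) = x t - γ • g t)
    (hg : ∀ t, g (t + 1) = g t + C (gradient f (x (t + 1)) - g t))
    (Φ : ℕ → ℝ)
    (hΦ : ∀ t, Φ t = f (x t) - finf + (γ / (2 * θ)) * ‖g t - gradient f (x t)‖ ^ 2) :
    ∀ t, Φ (t + 1) ≤ Φ t - (γ / 2) * ‖gradient f (x t)‖ ^ 2 := by
  intro t
  have hθ0 : 0 < θ := by
    rw [hθ, sub_pos, Real.sqrt_lt' one_pos]
    linarith
  have hdescent := image_sub_smul_le hdiff hlip (x t) (g t) γ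
  rw [← hx t] at hdescent
  have hgrad : ‖gradient f (x (t + 1)) - gradient f (x t)‖ ≤ L * (γ * ‖g t‖) := by
    simpa [hx t, norm_smul, abs_of_pos hγ0] using hlip (x (t + 1)) (x t)
  have herror : ‖g (t + 1) - gradient f (x (t + 1))‖ ^ 2
      ≤ (1 - θ) * ‖g t - gradient f (x t)‖ ^ 2 + β * (L * (γ * ‖g t‖)) ^ 2 := by
    have hβ0 : 0 ≤ β := by rw [hβ]; exact div_nonneg (by linarith) hθ0.le
    have hr : √(1 - α) = 1 - θ := by rw [hθ, sub_sub_cancel]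
    have hcompress := norm_add_compress_sub_sq_le hα0 hα1.le hC (g t) (gradient f (x t))
      (gradient f (x (t + 1)))
    rw [← hg t, ← hθ, ← hβ, hr] at hcompress
    refine hcompress.trans ?_
    gcongr
  have hgain : γ / (2 * θ) * ((1 - θ) * ‖g t - gradient f (x t)‖ ^ 2 + β * (L * (γ * ‖g t‖)) ^ 2)
      = γ / (2 * θ) * ‖g t - gradient f (x t)‖ ^ 2 - γ / 2 * ‖g t - gradient f (x t)‖ ^ 2
        + γ / 2 * ‖g t‖ ^ 2 * (γ ^ 2 * β * L ^ 2 / θ) := by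
    field_simp
  have hweighted := mul_le_mul_of_nonneg_left herror (by positivity : 0 ≤ γ / (2 * θ))
  have hstepsize := mul_le_mul_of_nonneg_left hγ (by positivity : 0 ≤ γ / 2 * ‖g t‖ ^ 2)
  rw [hΦ, hΦ]
  linarith

/-- Single-node deterministic EF21 Lyapunov descent inequality. -/
theorem EF21_single_node_descent {d : ℕ}
    (f : EuclideanSpace ℝ (Fin d) → ℝ) (L : ℝ)
    (hdiff : Differentiable ℝ f)
    (hlip : ∀ x y, ‖gradient f x - gradient f y‖ ≤ L * ‖x - y‖)
    (finf : ℝ) (hbelow : ∀ x, finf ≤ f x)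
    (C : EuclideanSpace ℝ (Fin d) → EuclideanSpace ℝ (Fin d)) (α : ℝ)
    (hα0 : 0 < α) (hα1 : α < 1)
    (hC : ∀ x, ‖C x - x‖ ^ 2 ≤ (1 - α) * ‖x‖ ^ 2)
    (θ β : ℝ) (hθ : θ = 1 - Real.sqrt (1 - α)) (hβ : β = (1 - α) / θ)
    (γ : ℝ) (hγ0 : 0 < γ) (hγ : γ ^ 2 * β * L ^ 2 / θ + γ * L ≤ 1)
    (x g : ℕ → EuclideanSpace ℝ (Fin d))
    (hx : ∀ t, x (t + 1) = x t - γ • g t)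
    (hg : ∀ t, g (t + 1) = g t + C (gradient f (x (t + 1)) - g t))
    (Φ : ℕ → ℝ)
    (hΦ : ∀ t, Φ t = f (x t) - finf + (γ / (2 * θ)) * ‖g t - gradient f (x t)‖ ^ 2) :
    ∀ t, Φ (t + 1) ≤ Φ t - (γ / 2) * ‖gradient f (x t)‖ ^ 2 :=
  EF21_single_node_descent_general f L hdiff hlip finf C α hα0 hα1 hC θ β hθ hβ γ hγ0 hγ x g hx hg Φ
    hΦ
end
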